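/- arXiv:2602.05888 — 3 statements merged into one kernel-verified Lean document; each statement's English description precedes it below -/
import Mathlib

section
/- In every modified fractional hedonic game with symmetric, non-negative valuations, every improving swap strictly increases the social welfare. Consequently every sequence of improving swaps is finite (the game has the finite improvement property), and in particular a swap-stable coalition structure exists. -/
open Finset

noncomputable section

/-- The coalition with index `c` of the coalition structure given by the assignment `P`.
(A partition of `n` agents has at most `n` nonempty parts, so coalition structures are
modeled as assignments `P : Fin n → Fin n`.) -/
def coalM {n : ℕ} (P : Fin n → Fin n) (c : Fin n) : Finset (Fin n) :=
  Finset.univ.filter (fun i => P i = c)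

/-- Utility of agent `i` in a modified fractional hedonic game with valuations `w`:
the average valuation of the other members of its coalition
(an agent alone in its coalition has utility `0/0 = 0`). -/
def util {n : ℕ} (w : Fin n → Fin n → ℝ) (P : Fin n → Fin n) (i : Fin n) : ℝ :=
  (∑ j ∈ (coalM P (P i)).erase i, w i j) / (((coalM P (P i)).card : ℝ) - 1)

/-- Social welfare: the sum of all agents' utilities. -/
def SW {n : ℕ} (w : Fin n → Fin n → ℝ) (P : Fin n → Fin n) : ℝ :=
  ∑ i, util w P i

/-- The coalition structure obtained when agents `i` and `j` exchange their coalitions. -/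
def swapP {n : ℕ} (P : Fin n → Fin n) (i j : Fin n) : Fin n → Fin n :=
  Function.update (Function.update P i (P j)) j (P i)

/-- Agents `i` and `j` (in different coalitions) have an improving swap if exchanging
their coalitions strictly increases the utility of both. -/
def ImprovingSwap {n : ℕ} (w : Fin n → Fin n → ℝ) (P : Fin n → Fin n) (i j : Fin n) : Prop :=
  P i ≠ P j ∧ util w P i < util w (swapP P i j) i ∧ util w P j < util w (swapP P i j) j

lemma mem_coalM {n : ℕ} (P : Fin n → Fin n) (c k : Fin n) : k ∈ coalM P c ↔ P k = c := by
  simp [coalM]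

lemma swapP_apply_i {n : ℕ} (P : Fin n → Fin n) {i j : Fin n} (hij : i ≠ j) :
    swapP P i j i = P j := by
  simp [swapP, Function.update_of_ne hij]

lemma swapP_apply_j {n : ℕ} (P : Fin n → Fin n) (i j : Fin n) :
    swapP P i j j = P i := by
  simp [swapP]

lemma swapP_apply_other {n : ℕ} (P : Fin n → Fin n) {i j k : Fin n} (hki : k ≠ i)
    (hkj : k ≠ j) : swapP P i j k = P k := by
  simp [swapP, Function.update_of_ne hkj, Function.update_of_ne hki]

/-- In every modified fractional hedonic game with symmetric, non-negative valuations: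
every improving swap strictly increases the social welfare; consequently there is no
infinite sequence of improving swaps (the finite improvement property), and in
particular a swap-stable coalition structure exists. -/
theorem mfhg_swaps_increase_welfare_fip_and_stable_exists
    (n : ℕ) (w : Fin n → Fin n → ℝ)
    (hnonneg : ∀ i j : Fin n, i ≠ j → 0 ≤ w i j)
    (hsymm : ∀ i j : Fin n, w i j = w j i) :
    (∀ (P : Fin n → Fin n) (i j : Fin n),
        ImprovingSwap w P i j → SW w P < SW w (swapP P i j)) ∧
    (¬ ∃ f : ℕ → (Fin n → Fin n),
        ∀ t : ℕ, ∃ i j : Fin n, ImprovingSwap w (f t) i j ∧ f (t + 1) = swapP (f t) i j) ∧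
    (∃ P : Fin n → Fin n, ∀ i j : Fin n, ¬ ImprovingSwap w P i j) := by
  have key : ∀ (P : Fin n → Fin n) (i j : Fin n),
      ImprovingSwap w P i j → SW w P < SW w (swapP P i j) := by
    intro P i j h
    obtain ⟨hPij, hi, hj⟩ := h
    have hij : i ≠ j := fun hh => hPij (by rw [hh])
    set P' := swapP P i j with hP'def
    have hP'i : P' i = P j := swapP_apply_i P hij
    have hP'j : P' j = P i := swapP_apply_j P i j
    have hP'o : ∀ k : Fin n, k ≠ i → k ≠ j → P' k = P k :=
      fun k h1 h2 => swapP_apply_other P h1 h2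
    set A := coalM P (P i) with hAdef
    set B := coalM P (P j) with hBdef
    have hiA : i ∈ A := by rw [hAdef, mem_coalM]
    have hjB : j ∈ B := by rw [hBdef, mem_coalM]
    have hjA : j ∉ A := by rw [hAdef, mem_coalM]; exact fun hh => hPij hh.symm
    have hiB : i ∉ B := by rw [hBdef, mem_coalM]; exact hPij
    -- coalitions after the swap
    have hcoalA : coalM P' (P i) = insert j (A.erase i) := by
      ext k
      rw [mem_coalM, mem_insert, mem_erase, hAdef, mem_coalM]
      constructor
      · intro hk
        by_cases hkj : k = j
        · exact Or.inl hkj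
        · by_cases hki : k = i
          · subst hki; rw [hP'i] at hk; exact absurd hk.symm hPij
          · rw [hP'o k hki hkj] at hk; exact Or.inr ⟨hki, hk⟩
      · rintro (rfl | ⟨hki, hk⟩)
        · exact hP'j
        · have hkj : k ≠ j := by rintro rfl; exact hPij hk.symm
          rw [hP'o k hki hkj]; exact hk
    have hcoalB : coalM P' (P j) = insert i (B.erase j) := by
      ext k
      rw [mem_coalM, mem_insert, mem_erase, hBdef, mem_coalM]
      constructor
      · intro hk
        by_cases hki : k = i
        · exact Or.inl hki
        · by_cases hkj : k = j
          · subst hkj; rw [hP'j] at hk; exact absurd hk hPij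
          · rw [hP'o k hki hkj] at hk; exact Or.inr ⟨hkj, hk⟩
      · rintro (rfl | ⟨hkj, hk⟩)
        · exact hP'i
        · have hki : k ≠ i := by rintro rfl; exact hPij hk
          rw [hP'o k hki hkj]; exact hk
    have hcoalOther : ∀ c : Fin n, c ≠ P i → c ≠ P j → coalM P' c = coalM P c := by
      intro c hci hcj
      ext k
      rw [mem_coalM, mem_coalM]
      by_cases hki : k = i
      · subst hki; rw [hP'i]
        constructor
        · intro hk; exact absurd hk.symm hcj
        · intro hk; exact absurd hk.symm hci
      · by_cases hkj : k = j
        · subst hkj; rw [hP'j]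
          constructor
          · intro hk; exact absurd hk.symm hci
          · intro hk; exact absurd hk.symm hcj
        · rw [hP'o k hki hkj]
    have hjAe : j ∉ A.erase i := fun hh => hjA (mem_of_mem_erase hh)
    have hiBe : i ∉ B.erase j := fun hh => hiB (mem_of_mem_erase hh)
    have hcardA' : (insert j (A.erase i)).card = A.card := by
      rw [card_insert_of_notMem hjAe, card_erase_of_mem hiA]
      have : 1 ≤ A.card := card_pos.2 ⟨i, hiA⟩
      omega
    have hcardB' : (insert i (B.erase j)).card = B.card := by
      rw [card_insert_of_notMem hiBe, card_erase_of_mem hjB]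
      have : 1 ≤ B.card := card_pos.2 ⟨j, hjB⟩
      omega
    -- abbreviations
    set X := ∑ m ∈ A.erase i, w i m with hX
    set U := ∑ m ∈ B.erase j, w i m with hU
    set Y := ∑ m ∈ B.erase j, w j m with hY
    set V := ∑ m ∈ A.erase i, w j m with hV
    set a := (A.card : ℝ) with ha
    set b := (B.card : ℝ) with hb
    -- the four utilities
    have hutil_i : util w P i = X / (a - 1) := by rw [util]
    have hutil_j : util w P j = Y / (b - 1) := by rw [util]
    have hutil_i' : util w P' i = U / (b - 1) := by
      rw [util, hP'i, hcoalB, hcardB', erase_insert hiBe]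
    have hutil_j' : util w P' j = V / (a - 1) := by
      rw [util, hP'j, hcoalA, hcardA', erase_insert hjAe]
    -- rule out singleton coalitions
    have hA2 : 2 ≤ A.card := by
      by_contra hlt
      have h1 : A.card = 1 := by
        have : 1 ≤ A.card := card_pos.2 ⟨i, hiA⟩
        omega
      have hAe : A.erase i = ∅ := by
        have := card_erase_of_mem hiA
        rw [h1] at this
        exact card_eq_zero.1 this
      have hV0 : V = 0 := by rw [hV, hAe, sum_empty]
      have ha1 : a - 1 = 0 := by rw [ha, h1]; norm_num
      rw [hutil_j', hV0, ha1, div_zero] at hj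
      have : 0 ≤ util w P j := by
        rw [hutil_j]
        apply div_nonneg
        · rw [hY]
          apply sum_nonneg
          intro m hm
          exact hsymm j m ▸ hnonneg m j (ne_of_mem_erase hm)
        · have : 1 ≤ B.card := card_pos.2 ⟨j, hjB⟩
          rw [hb]
          have : (1 : ℝ) ≤ (B.card : ℝ) := by exact_mod_cast this
          linarith
      linarith
    have hB2 : 2 ≤ B.card := by
      by_contra hlt
      have h1 : B.card = 1 := by
        have : 1 ≤ B.card := card_pos.2 ⟨j, hjB⟩
        omega
      have hBe : B.erase j = ∅ := by
        have := card_erase_of_mem hjB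
        rw [h1] at this
        exact card_eq_zero.1 this
      have hU0 : U = 0 := by rw [hU, hBe, sum_empty]
      have hb1 : b - 1 = 0 := by rw [hb, h1]; norm_num
      rw [hutil_i', hU0, hb1, div_zero] at hi
      have : 0 ≤ util w P i := by
        rw [hutil_i]
        apply div_nonneg
        · rw [hX]
          apply sum_nonneg
          intro m hm
          exact hsymm i m ▸ hnonneg m i (ne_of_mem_erase hm)
        · have : 1 ≤ A.card := card_pos.2 ⟨i, hiA⟩
          rw [ha]
          have : (1 : ℝ) ≤ (A.card : ℝ) := by exact_mod_cast this
          linarith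
      linarith
    have hαpos : (0 : ℝ) < a - 1 := by
      rw [ha]
      have : (2 : ℝ) ≤ (A.card : ℝ) := by exact_mod_cast hA2
      linarith
    have hβpos : (0 : ℝ) < b - 1 := by
      rw [hb]
      have : (2 : ℝ) ≤ (B.card : ℝ) := by exact_mod_cast hB2
      linarith
    -- the difference of utilities for each agent
    set d := fun k => util w P' k - util w P k with hd
    -- members of A other than i
    have hdA : ∀ k ∈ A.erase i, d k = (w k j - w k i) / (a - 1) := by
      intro k hk
      have hki : k ≠ i := ne_of_mem_erase hk
      have hkA : k ∈ A := mem_of_mem_erase hk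
      have hkj : k ≠ j := by rintro rfl; exact hjA hkA
      have hPk : P k = P i := (mem_coalM P (P i) k).1 hkA
      have hP'k : P' k = P k := hP'o k hki hkj
      have h1 : util w P' k = (w k j + ∑ m ∈ (A.erase i).erase k, w k m) / (a - 1) := by
        rw [util, hP'k, hPk, hcoalA, hcardA',
          erase_insert_of_ne hkj.symm, sum_insert (fun hh => hjAe (mem_of_mem_erase hh))]
      have h2 : util w P k = (w k i + ∑ m ∈ (A.erase i).erase k, w k m) / (a - 1) := by
        rw [util, hPk]
        congr 1
        have hiAk : i ∈ A.erase k := mem_erase.2 ⟨hki.symm, hiA⟩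
        rw [← insert_erase hiAk, sum_insert (notMem_erase i _), erase_right_comm]
      simp only [hd]
      rw [h1, h2, div_sub_div_same]
      ring_nf
    have hdB : ∀ k ∈ B.erase j, d k = (w k i - w k j) / (b - 1) := by
      intro k hk
      have hkj : k ≠ j := ne_of_mem_erase hk
      have hkB : k ∈ B := mem_of_mem_erase hk
      have hki : k ≠ i := by rintro rfl; exact hiB hkB
      have hPk : P k = P j := (mem_coalM P (P j) k).1 hkB
      have hP'k : P' k = P k := hP'o k hki hkj
      have h1 : util w P' k = (w k i + ∑ m ∈ (B.erase j).erase k, w k m) / (b - 1) := by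
        rw [util, hP'k, hPk, hcoalB, hcardB',
          erase_insert_of_ne hki.symm, sum_insert (fun hh => hiBe (mem_of_mem_erase hh))]
      have h2 : util w P k = (w k j + ∑ m ∈ (B.erase j).erase k, w k m) / (b - 1) := by
        rw [util, hPk]
        congr 1
        have hjBk : j ∈ B.erase k := mem_erase.2 ⟨hkj.symm, hjB⟩
        rw [← insert_erase hjBk, sum_insert (notMem_erase j _), erase_right_comm]
      simp only [hd]
      rw [h1, h2, div_sub_div_same]
      ring_nf
    -- agents outside A ∪ B are unaffected
    set S : Finset (Fin n) := insert i (insert j (A.erase i ∪ B.erase j)) with hS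
    have hdzero : ∀ k, k ∉ S → d k = 0 := by
      intro k hk
      rw [hS] at hk
      simp only [mem_insert, mem_union, mem_erase, not_or] at hk
      obtain ⟨hki, hkj, hk1, hk2⟩ := hk
      have hkA : k ∉ A := fun hh => hk1 ⟨hki, hh⟩
      have hkB : k ∉ B := fun hh => hk2 ⟨hkj, hh⟩
      have hPki : P k ≠ P i := fun hh => hkA ((mem_coalM P (P i) k).2 hh)
      have hPkj : P k ≠ P j := fun hh => hkB ((mem_coalM P (P j) k).2 hh)
      have hP'k : P' k = P k := hP'o k hki hkj
      simp only [hd]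
      rw [util, util, hP'k, hcoalOther (P k) hPki hPkj, sub_self]
    -- sum up
    have hdisj : Disjoint (A.erase i) (B.erase j) := by
      rw [disjoint_left]
      intro k hk1 hk2
      have h1 : P k = P i := (mem_coalM P (P i) k).1 (mem_of_mem_erase hk1)
      have h2 : P k = P j := (mem_coalM P (P j) k).1 (mem_of_mem_erase hk2)
      exact hPij (h1 ▸ h2)
    have hiS : i ∉ insert j (A.erase i ∪ B.erase j) := by
      simp only [mem_insert, mem_union, not_or]
      exact ⟨hij, notMem_erase i A, hiBe⟩
    have hjS : j ∉ A.erase i ∪ B.erase j := by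
      simp only [mem_union, not_or]
      exact ⟨hjAe, notMem_erase j B⟩
    have hsum : SW w P' - SW w P = ∑ k, d k := by
      rw [SW, SW, ← sum_sub_distrib]
    have hsum2 : ∑ k, d k = ∑ k ∈ S, d k :=
      (sum_subset (subset_univ S) (fun k _ hk => hdzero k hk)).symm
    have hsum3 : ∑ k ∈ S, d k
        = d i + (d j + (∑ k ∈ A.erase i, d k + ∑ k ∈ B.erase j, d k)) := by
      rw [hS, sum_insert hiS, sum_insert hjS, sum_union hdisj]
    have hsumA : ∑ k ∈ A.erase i, d k = (V - X) / (a - 1) := by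
      rw [sum_congr rfl hdA, ← sum_div]
      congr 1
      rw [sum_sub_distrib, hV, hX]
      congr 1
      · exact sum_congr rfl (fun m _ => hsymm m j)
      · exact sum_congr rfl (fun m _ => hsymm m i)
    have hsumB : ∑ k ∈ B.erase j, d k = (U - Y) / (b - 1) := by
      rw [sum_congr rfl hdB, ← sum_div]
      congr 1
      rw [sum_sub_distrib, hU, hY]
      congr 1
      · exact sum_congr rfl (fun m _ => hsymm m i)
      · exact sum_congr rfl (fun m _ => hsymm m j)
    have hdi : d i = U / (b - 1) - X / (a - 1) := by
      simp only [hd]; rw [hutil_i', hutil_i]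
    have hdj : d j = V / (a - 1) - Y / (b - 1) := by
      simp only [hd]; rw [hutil_j', hutil_j]
    rw [hutil_i, hutil_i'] at hi
    rw [hutil_j, hutil_j'] at hj
    have hfinal : 0 < SW w P' - SW w P := by
      rw [hsum, hsum2, hsum3, hsumA, hsumB, hdi, hdj, sub_div, sub_div]
      linarith
    linarith
  refine ⟨key, ?_, ?_⟩
  · rintro ⟨f, hf⟩
    have hmono : StrictMono (fun t => SW w (f t)) := by
      apply strictMono_nat_of_lt_succ
      intro t
      obtain ⟨i, j, h1, h2⟩ := hf t
      show SW w (f t) < SW w (f (t + 1))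
      rw [h2]
      exact key _ _ _ h1
    obtain ⟨x, y, hxy, hfeq⟩ := Finite.exists_ne_map_eq_of_infinite f
    exact hxy (hmono.injective (congrArg (SW w) hfeq))
  · have hne : Nonempty (Fin n → Fin n) := ⟨id⟩
    obtain ⟨P, hP⟩ := Finite.exists_max (SW w)
    exact ⟨P, fun i j h => absurd (hP (swapP P i j)) (not_le.2 (key P i j h))⟩
end
end

section
/- Let cost_m be a monotone cost function and let C = {C_1, …, C_k} be a sorted coalition structure of an instance consisting of exactly k nonempty coalitions, numbered so that all values in C_i are at most all values in C_{i+1}. Then either C is a jump equilibrium, or some coalition C_i admits a left-improving move (its minimum-value agent L(C_i) strictly decreases its cost by moving to C_{i−1}) or a right-improving move (its maximum-value agent R(C_i) strictly decreases its cost by moving to C_{i+1}). -/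
open Finset

noncomputable section

/-- The coalition with index `c` of the coalition structure given by the assignment `P`. -/
def coal {n k : ℕ} (P : Fin n → Fin k) (c : Fin k) : Finset (Fin n) :=
  Finset.univ.filter (fun i => P i = c)

/-- An abstract cost function: it assigns a cost to an agent's value `x` together with
the multiset of values of the other members of its coalition (for an agent not in a
coalition `C`, the cost is evaluated on the multiset of all values of `C`). -/
abbrev CostFun := ℝ → Multiset ℝ → ℝ

/-- Cost of agent `i` in its coalition under the abstract cost function `f`. -/
def costOf {n k : ℕ} (f : CostFun) (v : Fin n → ℝ) (P : Fin n → Fin k) (i : Fin n) : ℝ :=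
  f (v i) (((coal P (P i)).erase i).val.map v)

/-- A cost function is monotone if it satisfies properties (i), (ii) and (iii).
Coalitions are represented by the (nonempty) multisets of values of their members;
`L(C)`/`R(C)` conditions are expressed by bounding all members of the multiset. -/
def MonotoneCostFun (f : CostFun) : Prop :=
  -- (i): if v_x ≤ v_y ≤ v_{L(C)} or v_{R(C)} ≤ v_y ≤ v_x then f(y,C) ≤ f(x,C)
  (∀ (x y : ℝ) (S : Multiset ℝ), S ≠ 0 →
    ((x ≤ y ∧ ∀ s ∈ S, y ≤ s) ∨ (y ≤ x ∧ ∀ s ∈ S, s ≤ y)) →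
    f y S ≤ f x S) ∧
  -- (ii): for disjoint coalitions C, D (multiset union `S + T`) and x outside, if
  -- v_x ≤ v_{L(C)} ≤ v_{R(C)} ≤ v_{L(D)} or v_{R(D)} ≤ v_{L(C)} ≤ v_{R(C)} ≤ v_x
  -- then f(x,C) ≤ f(x,C ∪ D) ≤ f(x,D)
  (∀ (x : ℝ) (S T : Multiset ℝ), S ≠ 0 → T ≠ 0 →
    (((∀ s ∈ S, x ≤ s) ∧ (∀ s ∈ S, ∀ t ∈ T, s ≤ t)) ∨
     ((∀ t ∈ T, ∀ s ∈ S, t ≤ s) ∧ (∀ s ∈ S, s ≤ x))) →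
    f x S ≤ f x (S + T) ∧ f x (S + T) ≤ f x T) ∧
  -- (iii): if some c ∈ C has f(c, C\{c}) > f(c, D) then so does the extreme member of C
  -- on the side of D (`r` plays the role of R(C) resp. L(C))
  (∀ (S T : Multiset ℝ) (c r : ℝ), c ∈ S → r ∈ S → T ≠ 0 →
    f c (S.erase c) > f c T →
    (((∀ s ∈ S, s ≤ r) ∧ (∀ t ∈ T, r ≤ t)) → f r (S.erase r) > f r T) ∧
    (((∀ s ∈ S, r ≤ s) ∧ (∀ t ∈ T, t ≤ r)) → f r (S.erase r) > f r T))

lemma mem_coal {n k : ℕ} {P : Fin n → Fin k} {c : Fin k} {i : Fin n} :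
    i ∈ coal P c ↔ P i = c := by simp [coal]

lemma map_erase_val {n : ℕ} (v : Fin n → ℝ) (s : Finset (Fin n)) (a : Fin n) (ha : a ∈ s) :
    ((s.erase a).val).map v = (s.val.map v).erase (v a) := by
  rw [Finset.erase_val]
  obtain ⟨t, ht⟩ := Multiset.exists_cons_of_mem ha
  rw [ht]
  simp

lemma coal_update_erase {n k : ℕ} (P : Fin n → Fin k) (x : Fin n) (c : Fin k)
    (h : P x ≠ c) : (coal (Function.update P x c) c).erase x = coal P c := by
  ext i
  simp only [Finset.mem_erase, coal, Finset.mem_filter, Finset.mem_univ, true_and]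
  rcases eq_or_ne i x with rfl | h'
  · simp [h]
  · simp [Function.update_of_ne h', h']

lemma costOf_update {n k : ℕ} (f : CostFun) (v : Fin n → ℝ) (P : Fin n → Fin k)
    (x : Fin n) (c : Fin k) (h : P x ≠ c) :
    costOf f v (Function.update P x c) x = f (v x) ((coal P c).val.map v) := by
  unfold costOf
  rw [Function.update_self, coal_update_erase P x c h]

lemma costOf_self {n k : ℕ} (f : CostFun) (v : Fin n → ℝ) (P : Fin n → Fin k) (x : Fin n) :
    costOf f v P x = f (v x) (((coal P (P x)).val.map v).erase (v x)) := by
  unfold costOf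
  rw [map_erase_val v _ x (mem_coal.mpr rfl)]

lemma coal_val_ne {n k : ℕ} (v : Fin n → ℝ) {P : Fin n → Fin k} {c : Fin k}
    (h : (coal P c).Nonempty) : (coal P c).val.map v ≠ 0 := by
  obtain ⟨a, ha⟩ := h
  intro h0
  have : v a ∈ (coal P c).val.map v := Multiset.mem_map_of_mem v (Finset.mem_val.mpr ha)
  simp [h0] at this

/-- let `cost_m` be a monotone cost function and `P` a sorted coalition
structure with exactly `k` nonempty coalitions, numbered ascendingly (agents in a
coalition of smaller index have values at most those in coalitions of larger index).
Then either `P` is a jump equilibrium, or some coalition admits a left-improving move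
(its minimum-value agent strictly improves by moving to the coalition directly to its
left) or a right-improving move (its maximum-value agent strictly improves by moving
to the coalition directly to its right). -/
theorem sorted_structure_jump_eq_or_left_right_improving
    {n k : ℕ} (v : Fin n → ℝ) (hv : Monotone v)
    (costm : CostFun) (hmono : MonotoneCostFun costm)
    (P : Fin n → Fin k)
    (hne : ∀ c : Fin k, (coal P c).Nonempty)
    (hsorted : ∀ i j l : Fin n, P i = P j → v i ≤ v l → v l ≤ v j → P l = P i)
    (hord : ∀ a b : Fin n, P a < P b → v a ≤ v b) :
    -- either P is a jump equilibrium …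
    (∀ (x : Fin n) (c : Fin k), c ≠ P x →
      ¬ costOf costm v (Function.update P x c) x < costOf costm v P x) ∨
    -- … or there is a left- or right-improving move
    (∃ (x : Fin n) (c : Fin k),
      ((((c : ℕ) + 1 = (P x : ℕ)) ∧ (∀ y : Fin n, P y = P x → v x ≤ v y)) ∨
       (((P x : ℕ) + 1 = (c : ℕ)) ∧ (∀ y : Fin n, P y = P x → v y ≤ v x))) ∧
      costOf costm v (Function.update P x c) x < costOf costm v P x) := by
  by_cases heq : (∀ (x : Fin n) (c : Fin k), c ≠ P x →
      ¬ costOf costm v (Function.update P x c) x < costOf costm v P x)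
  · exact Or.inl heq
  right
  push_neg at heq
  obtain ⟨x, d, hd, himp⟩ := heq
  obtain ⟨h1, h2, h3⟩ := hmono
  have hxd : P x ≠ d := fun h => hd h.symm
  rw [costOf_update costm v P x d hxd, costOf_self] at himp
  have hxS : v x ∈ (coal P (P x)).val.map v :=
    Multiset.mem_map_of_mem v (Finset.mem_val.mpr (mem_coal.mpr rfl))
  have hTd0 : (coal P d).val.map v ≠ 0 := coal_val_ne v (hne d)
  rcases lt_or_gt_of_ne hd with hlt | hgt
  · -- d < P x : left-improving move by the minimum-value agent of coal P (P x)
    obtain ⟨L, hL, hLmin⟩ := Finset.exists_min_image (coal P (P x)) v (hne (P x))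
    have hPL : P L = P x := mem_coal.mp hL
    have hpos : 1 ≤ (P x : ℕ) := by
      have := Fin.lt_iff_val_lt_val.mp hlt; omega
    set c : Fin k := ⟨(P x : ℕ) - 1, by omega⟩ with hc
    have hcx : (c : ℕ) < (P x : ℕ) := by simp [hc]; omega
    have hdc : (d : ℕ) ≤ (c : ℕ) := by
      have := Fin.lt_iff_val_lt_val.mp hlt; simp [hc]; omega
    have hLS : v L ∈ (coal P (P x)).val.map v := Multiset.mem_map_of_mem v (Finset.mem_val.mpr hL)
    have hTc0 : (coal P c).val.map v ≠ 0 := coal_val_ne v (hne c)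
    have h3' := (h3 ((coal P (P x)).val.map v) ((coal P d).val.map v) (v x) (v L)
        hxS hLS hTd0 himp).2 ⟨?_, ?_⟩
    · have hDle : costm (v L) ((coal P c).val.map v) ≤ costm (v L) ((coal P d).val.map v) := by
        rcases eq_or_lt_of_le hdc with hce | hlt'
        · have : d = c := Fin.ext hce.symm ▸ rfl
          rw [show c = d from Fin.ext hce.symm]
        · have hcond : ((∀ t ∈ (coal P d).val.map v, ∀ s ∈ (coal P c).val.map v, t ≤ s) ∧
              (∀ s ∈ (coal P c).val.map v, s ≤ v L)) := by
            constructor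
            · intro t ht s hs
              obtain ⟨a, ha, rfl⟩ := Multiset.mem_map.mp hs
              obtain ⟨b, hb, rfl⟩ := Multiset.mem_map.mp ht
              exact hord b a (Fin.lt_iff_val_lt_val.mpr (by
                rw [mem_coal.mp (Finset.mem_val.mp ha), mem_coal.mp (Finset.mem_val.mp hb)]
                exact hlt'))
            · intro s hs
              obtain ⟨a, ha, rfl⟩ := Multiset.mem_map.mp hs
              refine hord a L (Fin.lt_iff_val_lt_val.mpr ?_)
              rw [mem_coal.mp (Finset.mem_val.mp ha), hPL]
              exact hcx
          have := h2 (v L) ((coal P c).val.map v) ((coal P d).val.map v) hTc0 hTd0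
            (Or.inr hcond)
          linarith [this.1, this.2]
      refine ⟨L, c, Or.inl ⟨by simp [hc, hPL]; omega, fun y hy => hLmin y
        (mem_coal.mpr (hy.trans hPL))⟩, ?_⟩
      have hPLc : P L ≠ c := by
        rw [hPL]; intro h; rw [h] at hcx; omega
      rw [costOf_update costm v P L c hPLc, costOf_self, hPL]
      exact lt_of_le_of_lt hDle h3'
    · intro s hs
      obtain ⟨a, ha, rfl⟩ := Multiset.mem_map.mp hs
      exact hLmin a (Finset.mem_val.mp ha)
    · intro t ht
      obtain ⟨b, hb, rfl⟩ := Multiset.mem_map.mp ht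
      refine hord b L (Fin.lt_iff_val_lt_val.mpr ?_)
      rw [mem_coal.mp (Finset.mem_val.mp hb), hPL]
      exact Fin.lt_iff_val_lt_val.mp hlt
  · -- P x < d : right-improving move by the maximum-value agent of coal P (P x)
    obtain ⟨R, hR, hRmax⟩ := Finset.exists_max_image (coal P (P x)) v (hne (P x))
    have hPR : P R = P x := mem_coal.mp hR
    have hk : (P x : ℕ) + 1 < k := by
      have := Fin.lt_iff_val_lt_val.mp hgt; omega
    set c : Fin k := ⟨(P x : ℕ) + 1, hk⟩ with hc
    have hcx : (P x : ℕ) < (c : ℕ) := by simp [hc]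
    have hcd : (c : ℕ) ≤ (d : ℕ) := by
      have := Fin.lt_iff_val_lt_val.mp hgt; simp [hc]; omega
    have hRS : v R ∈ (coal P (P x)).val.map v := Multiset.mem_map_of_mem v (Finset.mem_val.mpr hR)
    have hTc0 : (coal P c).val.map v ≠ 0 := coal_val_ne v (hne c)
    have h3' := (h3 ((coal P (P x)).val.map v) ((coal P d).val.map v) (v x) (v R)
        hxS hRS hTd0 himp).1 ⟨?_, ?_⟩
    · have hDle : costm (v R) ((coal P c).val.map v) ≤ costm (v R) ((coal P d).val.map v) := by
        rcases eq_or_lt_of_le hcd with hce | hlt'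
        · rw [show c = d from Fin.ext hce]
        · have hcond : ((∀ s ∈ (coal P c).val.map v, v R ≤ s) ∧
              (∀ s ∈ (coal P c).val.map v, ∀ t ∈ (coal P d).val.map v, s ≤ t)) := by
            constructor
            · intro s hs
              obtain ⟨a, ha, rfl⟩ := Multiset.mem_map.mp hs
              refine hord R a (Fin.lt_iff_val_lt_val.mpr ?_)
              rw [mem_coal.mp (Finset.mem_val.mp ha), hPR]
              exact hcx
            · intro s hs t ht
              obtain ⟨a, ha, rfl⟩ := Multiset.mem_map.mp hs
              obtain ⟨b, hb, rfl⟩ := Multiset.mem_map.mp ht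
              exact hord a b (Fin.lt_iff_val_lt_val.mpr (by
                rw [mem_coal.mp (Finset.mem_val.mp ha), mem_coal.mp (Finset.mem_val.mp hb)]
                exact hlt'))
          have := h2 (v R) ((coal P c).val.map v) ((coal P d).val.map v) hTc0 hTd0
            (Or.inl hcond)
          linarith [this.1, this.2]
      refine ⟨R, c, Or.inr ⟨by simp [hc, hPR], fun y hy => hRmax y
        (mem_coal.mpr (hy.trans hPR))⟩, ?_⟩
      have hPRc : P R ≠ c := by
        rw [hPR]; intro h; rw [h] at hcx; omega
      rw [costOf_update costm v P R c hPRc, costOf_self, hPR]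
      exact lt_of_le_of_lt hDle h3'
    · intro s hs
      obtain ⟨a, ha, rfl⟩ := Multiset.mem_map.mp hs
      exact hRmax a (Finset.mem_val.mp ha)
    · intro t ht
      obtain ⟨b, hb, rfl⟩ := Multiset.mem_map.mp ht
      refine hord R b (Fin.lt_iff_val_lt_val.mpr ?_)
      rw [mem_coal.mp (Finset.mem_val.mp hb), hPR]
      exact Fin.lt_iff_val_lt_val.mp hgt
end
end

section
/- The Max, Average, and Cutoff_λ (for every λ > 0) cost functions are all monotone, i.e., each of them satisfies properties (i), (ii) and (iii) of the definition of a monotone cost function. -/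
open Finset

noncomputable section

/-- The Average cost function on value-multisets: the average distance of `x` to the
members of `S`. -/
def avgM : CostFun := fun x S => (S.map (fun s => |x - s|)).sum / (S.card : ℝ)

/-- The Max cost function on value-multisets: the maximum distance of `x` to the
members of `S`. -/
def maxM : CostFun := fun x S => (S.map (fun s => |x - s|)).fold max 0

/-- The Cutoff_λ cost function on value-multisets: the fraction of members of `S` at
distance strictly more than `lam` from `x`. -/
def cutM (lam : ℝ) : CostFun := fun x S =>
  ((S.filter (fun s => lam < |x - s|)).card : ℝ) / (S.card : ℝ)

/-! ### Auxiliary lemmas -/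

section Aux

lemma foldMax_nonneg (M : Multiset ℝ) : 0 ≤ M.fold max 0 := by
  induction M using Multiset.induction_on with
  | empty => simp
  | cons a s ih =>
    rw [Multiset.fold_cons_left]
    exact le_trans ih (le_max_right _ _)

lemma le_foldMax {M : Multiset ℝ} {a : ℝ} (h : a ∈ M) : a ≤ M.fold max 0 := by
  induction M using Multiset.induction_on with
  | empty => simp at h
  | cons b s ih =>
    rw [Multiset.fold_cons_left]
    rcases Multiset.mem_cons.mp h with rfl | h
    · exact le_max_left _ _
    · exact le_trans (ih h) (le_max_right _ _)

lemma foldMax_le {M : Multiset ℝ} {b : ℝ} (hb : 0 ≤ b) (h : ∀ a ∈ M, a ≤ b) :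
    M.fold max 0 ≤ b := by
  induction M using Multiset.induction_on with
  | empty => simpa using hb
  | cons a s ih =>
    rw [Multiset.fold_cons_left]
    exact max_le (h a (Multiset.mem_cons_self _ _))
      (ih fun x hx => h x (Multiset.mem_cons_of_mem hx))

lemma exists_gt_of_foldMax_gt {M : Multiset ℝ} {b : ℝ} (hb : 0 ≤ b)
    (h : b < M.fold max 0) : ∃ a ∈ M, b < a := by
  by_contra hcon
  push_neg at hcon
  exact absurd (foldMax_le hb hcon) (not_le.mpr h)

lemma card_filter_le_filter {α : Type*} (p q : α → Prop) [DecidablePred p] [DecidablePred q]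
    (S : Multiset α) (h : ∀ s ∈ S, p s → q s) :
    Multiset.card (S.filter p) ≤ Multiset.card (S.filter q) := by
  induction S using Multiset.induction_on with
  | empty => simp
  | cons a s ih =>
    have h2 := ih fun x hx => h x (Multiset.mem_cons_of_mem hx)
    rw [Multiset.filter_cons, Multiset.filter_cons, Multiset.card_add, Multiset.card_add]
    by_cases hp : p a
    · rw [if_pos hp, if_pos (h a (Multiset.mem_cons_self _ _) hp)]
      omega
    · rw [if_neg hp]
      simp only [Multiset.card_zero]
      omega

lemma mediant {a b m n : ℝ} (hm : 0 < m) (hn : 0 < n) (h : a * n ≤ m * b) :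
    a / m ≤ (a + b) / (m + n) ∧ (a + b) / (m + n) ≤ b / n := by
  constructor
  · rw [div_le_div_iff₀ hm (by linarith)]
    nlinarith
  · rw [div_le_div_iff₀ (by linarith) hn]
    nlinarith

lemma ddiv_le {a b c : ℝ} (h : a ≤ b) (hc : 0 ≤ c) : a / c ≤ b / c := by
  rcases hc.eq_or_lt with rfl | h0
  · simp
  · exact (div_le_div_iff_of_pos_right h0).mpr h

lemma map_neg_abs (x : ℝ) (S : Multiset ℝ) :
    (S.map (fun s => -s)).map (fun s => |(-x) - s|) = S.map (fun s => |x - s|) := by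
  rw [Multiset.map_map]
  refine Multiset.map_congr rfl fun s _ => ?_
  show |(-x) - (-s)| = |x - s|
  rw [show (-x) - (-s) = -(x - s) by ring, abs_neg]

lemma maxM_neg (x : ℝ) (S : Multiset ℝ) : maxM (-x) (S.map (fun s => -s)) = maxM x S := by
  unfold maxM
  rw [map_neg_abs]

lemma avgM_neg (x : ℝ) (S : Multiset ℝ) : avgM (-x) (S.map (fun s => -s)) = avgM x S := by
  unfold avgM
  rw [map_neg_abs, Multiset.card_map]

lemma cutM_neg (lam x : ℝ) (S : Multiset ℝ) :
    cutM lam (-x) (S.map (fun s => -s)) = cutM lam x S := by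
  unfold cutM
  have h1 : (S.map (fun s => -s)).filter (fun s => lam < |(-x) - s|)
      = (S.filter (fun s => lam < |x - s|)).map (fun s => -s) := by
    rw [Multiset.filter_map]
    congr 1
    refine Multiset.filter_congr fun s _ => ?_
    show lam < |(-x) - (-s)| ↔ lam < |x - s|
    rw [show (-x) - (-s) = -(x - s) by ring, abs_neg]
  rw [h1, Multiset.card_map, Multiset.card_map]

lemma avgM_nonneg (x : ℝ) (S : Multiset ℝ) : 0 ≤ avgM x S := by
  unfold avgM
  refine div_nonneg (Multiset.sum_nonneg fun a ha => ?_) (Nat.cast_nonneg _)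
  obtain ⟨s, _, rfl⟩ := Multiset.mem_map.mp ha
  exact abs_nonneg _

lemma cutM_nonneg (lam x : ℝ) (S : Multiset ℝ) : 0 ≤ cutM lam x S :=
  div_nonneg (Nat.cast_nonneg _) (Nat.cast_nonneg _)

lemma cutM_le_one (lam x : ℝ) (S : Multiset ℝ) : cutM lam x S ≤ 1 := by
  unfold cutM
  refine div_le_one_of_le₀ ?_ (Nat.cast_nonneg _)
  exact_mod_cast Multiset.card_le_card (Multiset.filter_le _ _)

/-- Meta-lemma: a cost function invariant under negation which satisfies the
"one-sided" versions of (i), (ii), (iii) is monotone. -/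
lemma monotone_of_onesided (f : CostFun)
    (hneg : ∀ x S, f (-x) (S.map (fun s => -s)) = f x S)
    (h1 : ∀ (x y : ℝ) (S : Multiset ℝ), S ≠ 0 → x ≤ y → (∀ s ∈ S, y ≤ s) → f y S ≤ f x S)
    (h2 : ∀ (x : ℝ) (S T : Multiset ℝ), S ≠ 0 → T ≠ 0 → (∀ s ∈ S, x ≤ s) →
      (∀ s ∈ S, ∀ t ∈ T, s ≤ t) → f x S ≤ f x (S + T) ∧ f x (S + T) ≤ f x T)
    (h3 : ∀ (S T : Multiset ℝ) (c r : ℝ), c ∈ S → r ∈ S → T ≠ 0 →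
      f c (S.erase c) > f c T → (∀ s ∈ S, s ≤ r) → (∀ t ∈ T, r ≤ t) →
      f r (S.erase r) > f r T) :
    MonotoneCostFun f := by
  refine ⟨?_, ?_, ?_⟩
  · rintro x y S hS (⟨hxy, h⟩ | ⟨hyx, h⟩)
    · exact h1 x y S hS hxy h
    · have key := h1 (-x) (-y) (S.map (fun s => -s))
        (by simpa using hS) (by linarith) ?_
      · rwa [hneg, hneg] at key
      · intro s hs
        obtain ⟨a, ha, rfl⟩ := Multiset.mem_map.mp hs
        simpa using h a ha
  · rintro x S T hS hT (⟨ha, hb⟩ | ⟨ha, hb⟩)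
    · exact h2 x S T hS hT ha hb
    · have key := h2 (-x) (S.map (fun s => -s)) (T.map (fun s => -s))
        (by simpa using hS) (by simpa using hT) ?_ ?_
      · rwa [← Multiset.map_add, hneg, hneg, hneg] at key
      · intro s hs
        obtain ⟨a, haS, rfl⟩ := Multiset.mem_map.mp hs
        simpa using hb a haS
      · intro s hs t ht
        obtain ⟨a, haS, rfl⟩ := Multiset.mem_map.mp hs
        obtain ⟨b, hbT, rfl⟩ := Multiset.mem_map.mp ht
        simpa using ha b hbT a haS
  · intro S T c r hc hr hT hgt
    constructor
    · rintro ⟨hs, ht⟩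
      exact h3 S T c r hc hr hT hgt hs ht
    · rintro ⟨hs, ht⟩
      have key := h3 (S.map (fun s => -s)) (T.map (fun s => -s)) (-c) (-r)
        (Multiset.mem_map_of_mem _ hc) (Multiset.mem_map_of_mem _ hr)
        (by simpa using hT) ?_ ?_ ?_
      · rwa [← Multiset.map_erase _ neg_injective, hneg, hneg] at key
      · rwa [← Multiset.map_erase _ neg_injective, hneg, hneg]
      · intro s hsm
        obtain ⟨a, haS, rfl⟩ := Multiset.mem_map.mp hsm
        simpa using hs a haS
      · intro t htm
        obtain ⟨b, hbT, rfl⟩ := Multiset.mem_map.mp htm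
        simpa using ht b hbT

end Aux

section Max

lemma maxM_i (x y : ℝ) (S : Multiset ℝ) (_ : S ≠ 0) (hxy : x ≤ y)
    (h : ∀ s ∈ S, y ≤ s) : maxM y S ≤ maxM x S := by
  refine foldMax_le (foldMax_nonneg _) fun a ha => ?_
  obtain ⟨s, hs, rfl⟩ := Multiset.mem_map.mp ha
  have hys := h s hs
  have h1 : |y - s| ≤ |x - s| := by
    rw [abs_of_nonpos (by linarith), abs_of_nonpos (by linarith)]
    linarith
  exact le_trans h1 (le_foldMax (Multiset.mem_map_of_mem _ hs))

lemma maxM_ii (x : ℝ) (S T : Multiset ℝ) (_ : S ≠ 0) (hT : T ≠ 0)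
    (hxS : ∀ s ∈ S, x ≤ s) (hST : ∀ s ∈ S, ∀ t ∈ T, s ≤ t) :
    maxM x S ≤ maxM x (S + T) ∧ maxM x (S + T) ≤ maxM x T := by
  obtain ⟨t0, ht0⟩ := Multiset.exists_mem_of_ne_zero hT
  constructor
  · refine foldMax_le (foldMax_nonneg _) fun a ha => ?_
    obtain ⟨s, hs, rfl⟩ := Multiset.mem_map.mp ha
    exact le_foldMax (Multiset.mem_map_of_mem _ (Multiset.mem_add.mpr (Or.inl hs)))
  · refine foldMax_le (foldMax_nonneg _) fun a ha => ?_
    obtain ⟨u, hu, rfl⟩ := Multiset.mem_map.mp ha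
    rcases Multiset.mem_add.mp hu with hu | hu
    · have h1 : |x - u| ≤ |x - t0| := by
        have := hxS u hu
        have := hST u hu t0 ht0
        rw [abs_of_nonpos (by linarith), abs_of_nonpos (by linarith)]
        linarith
      exact le_trans h1 (le_foldMax (Multiset.mem_map_of_mem _ ht0))
    · exact le_foldMax (Multiset.mem_map_of_mem _ hu)

lemma maxM_iii (S T : Multiset ℝ) (c r : ℝ) (hc : c ∈ S) (hr : r ∈ S) (hT : T ≠ 0)
    (hgt : maxM c (S.erase c) > maxM c T) (hsr : ∀ s ∈ S, s ≤ r)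
    (htr : ∀ t ∈ T, r ≤ t) : maxM r (S.erase r) > maxM r T := by
  have hcr : c ≤ r := hsr c hc
  obtain ⟨t0, ht0⟩ := Multiset.exists_mem_of_ne_zero hT
  obtain ⟨a, ha, hagt⟩ := exists_gt_of_foldMax_gt (foldMax_nonneg _) hgt
  obtain ⟨s0, hs0, rfl⟩ := Multiset.mem_map.mp ha
  have hs0S : s0 ∈ S := Multiset.mem_of_mem_erase hs0
  have hs0r : s0 ≤ r := hsr s0 hs0S
  set s1 := min c s0 with hs1
  have hs1S : s1 ∈ S := by
    rcases min_cases c s0 with ⟨h, _⟩ | ⟨h, _⟩ <;> rw [hs1, h] <;> assumption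
  have hbound : |c - s0| ≤ r - s1 := by
    rcases le_total c s0 with h | h
    · rw [abs_of_nonpos (by linarith), hs1, min_eq_left h]; linarith
    · rw [abs_of_nonneg (by linarith), hs1, min_eq_right h]; linarith
  have hpos : 0 < |c - s0| := lt_of_le_of_lt (foldMax_nonneg _) hagt
  have hs1ner : s1 ≠ r := by
    intro h
    rw [h] at hbound
    linarith
  have hs1er : s1 ∈ S.erase r := (Multiset.mem_erase_of_ne hs1ner).mpr hs1S
  have key : r - s1 ≤ maxM r (S.erase r) := by
    have h1 : |r - s1| ≤ maxM r (S.erase r) := le_foldMax (Multiset.mem_map_of_mem _ hs1er)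
    rwa [abs_of_nonneg (by linarith)] at h1
  have hTle : maxM r T ≤ maxM c T := by
    refine foldMax_le (foldMax_nonneg _) fun a ha => ?_
    obtain ⟨t, ht, rfl⟩ := Multiset.mem_map.mp ha
    have hrt := htr t ht
    have h1 : |r - t| ≤ |c - t| := by
      rw [abs_of_nonpos (by linarith), abs_of_nonpos (by linarith)]
      linarith
    exact le_trans h1 (le_foldMax (Multiset.mem_map_of_mem _ ht))
  calc maxM r T ≤ maxM c T := hTle
    _ < |c - s0| := hagt
    _ ≤ r - s1 := hbound
    _ ≤ maxM r (S.erase r) := key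

lemma maxM_monotone : MonotoneCostFun maxM :=
  monotone_of_onesided maxM maxM_neg maxM_i maxM_ii maxM_iii

end Max

section Avg

lemma sum_abs_erase (c x : ℝ) (S : Multiset ℝ) (hc : c ∈ S) :
    ((S.erase c).map (fun s => |x - s|)).sum + |x - c| = (S.map (fun s => |x - s|)).sum := by
  conv_rhs => rw [← Multiset.cons_erase hc]
  rw [Multiset.map_cons, Multiset.sum_cons]
  ring

lemma avgM_i (x y : ℝ) (S : Multiset ℝ) (_ : S ≠ 0) (hxy : x ≤ y)
    (h : ∀ s ∈ S, y ≤ s) : avgM y S ≤ avgM x S := by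
  unfold avgM
  refine ddiv_le ?_ (Nat.cast_nonneg _)
  refine Multiset.sum_map_le_sum_map _ _ fun s hs => ?_
  have := h s hs
  rw [abs_of_nonpos (by linarith), abs_of_nonpos (by linarith)]
  linarith

lemma avgM_ii (x : ℝ) (S T : Multiset ℝ) (hS : S ≠ 0) (hT : T ≠ 0)
    (hxS : ∀ s ∈ S, x ≤ s) (hST : ∀ s ∈ S, ∀ t ∈ T, s ≤ t) :
    avgM x S ≤ avgM x (S + T) ∧ avgM x (S + T) ≤ avgM x T := by
  set A := S.map (fun s => |x - s|) with hA
  set B := T.map (fun s => |x - s|) with hB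
  have hm : 0 < (Multiset.card A : ℝ) := by
    rw [hA, Multiset.card_map]
    exact_mod_cast Multiset.card_pos.mpr hS
  have hn : 0 < (Multiset.card B : ℝ) := by
    rw [hB, Multiset.card_map]
    exact_mod_cast Multiset.card_pos.mpr hT
  have hcross : ∀ a ∈ A, ∀ b ∈ B, a ≤ b := by
    intro a ha b hb
    obtain ⟨s, hs, rfl⟩ := Multiset.mem_map.mp ha
    obtain ⟨t, ht, rfl⟩ := Multiset.mem_map.mp hb
    have h1 := hxS s hs
    have h2 := hST s hs t ht
    rw [abs_of_nonpos (by linarith), abs_of_nonpos (by linarith)]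
    linarith
  have hkey : A.sum * (Multiset.card B : ℝ) ≤ (Multiset.card A : ℝ) * B.sum := by
    have h1 : (A.map (fun a => a * (Multiset.card B : ℝ))).sum
        ≤ (A.map (fun _ => B.sum)).sum := by
      refine Multiset.sum_map_le_sum_map _ _ fun a ha => ?_
      have h2 : (Multiset.card B) • a ≤ B.sum :=
        Multiset.card_nsmul_le_sum (hcross a ha)
      rw [nsmul_eq_mul] at h2
      linarith
    rw [Multiset.sum_map_mul_right] at h1
    rw [Multiset.map_const', Multiset.sum_replicate, nsmul_eq_mul] at h1
    simpa using h1
  have hmed := mediant hm hn hkey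
  have e1 : avgM x (S + T) = (A.sum + B.sum) / ((Multiset.card A : ℝ) + Multiset.card B) := by
    unfold avgM
    rw [Multiset.map_add, Multiset.sum_add, ← hA, ← hB]
    rw [Multiset.card_add, hA, hB, Multiset.card_map, Multiset.card_map]
    push_cast
    ring_nf
  have e2 : avgM x S = A.sum / (Multiset.card A : ℝ) := by
    unfold avgM; rw [hA, Multiset.card_map]
  have e3 : avgM x T = B.sum / (Multiset.card B : ℝ) := by
    unfold avgM; rw [hB, Multiset.card_map]
  rw [e1, e2, e3]
  exact hmed

lemma avgM_iii (S T : Multiset ℝ) (c r : ℝ) (hc : c ∈ S) (hr : r ∈ S) (hT : T ≠ 0)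
    (hgt : avgM c (S.erase c) > avgM c T) (hsr : ∀ s ∈ S, s ≤ r)
    (htr : ∀ t ∈ T, r ≤ t) : avgM r (S.erase r) > avgM r T := by
  have hcr : c ≤ r := hsr c hc
  have hSer : S.erase c ≠ 0 := by
    intro h
    rw [h] at hgt
    simp only [avgM, Multiset.map_zero, Multiset.sum_zero, Multiset.card_zero,
      Nat.cast_zero, zero_div] at hgt
    exact absurd (avgM_nonneg c T) (not_le.mpr hgt)
  have hcards : Multiset.card (S.erase c) = Multiset.card (S.erase r) := by
    rw [Multiset.card_erase_of_mem hc, Multiset.card_erase_of_mem hr]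
  set m := (Multiset.card (S.erase c) : ℝ) with hm
  have hmpos : 0 < m := by
    rw [hm]
    exact_mod_cast Multiset.card_pos.mpr hSer
  set k := (Multiset.card T : ℝ) with hk
  have hkpos : 0 < k := by
    rw [hk]
    exact_mod_cast Multiset.card_pos.mpr hT
  set A := ((S.erase c).map (fun s => |c - s|)).sum with hAdef
  set B := ((S.erase r).map (fun s => |r - s|)).sum with hBdef
  set u := (T.map (fun t => |r - t|)).sum with hudef
  -- A ≤ B + m * (r - c)
  have hAB : A ≤ B + m * (r - c) := by
    have h1 : A ≤ ((S.erase c).map (fun s => |r - s| + (r - c))).sum := by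
      rw [hAdef]
      refine Multiset.sum_map_le_sum_map _ _ fun s _ => ?_
      have h2 : |c - s| ≤ |c - r| + |r - s| := abs_sub_le c r s
      rw [abs_of_nonpos (by linarith : c - r ≤ 0)] at h2
      linarith
    rw [Multiset.sum_map_add, Multiset.map_const', Multiset.sum_replicate, nsmul_eq_mul] at h1
    have h3 : ((S.erase c).map (fun s => |r - s|)).sum ≤ B := by
      have e1 := sum_abs_erase c r S hc
      have e2 := sum_abs_erase r r S hr
      have h4 : |r - r| = 0 := by simp
      have h5 : 0 ≤ |r - c| := abs_nonneg _
      rw [hBdef]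
      linarith
    rw [← hm] at h1
    linarith
  -- T sums: (T.map |c - ·|).sum = u + k * (r - c)
  have hTsum : (T.map (fun t => |c - t|)).sum = u + k * (r - c) := by
    have h1 : T.map (fun t => |c - t|) = T.map (fun t => |r - t| + (r - c)) := by
      refine Multiset.map_congr rfl fun t ht => ?_
      have h2 := htr t ht
      rw [abs_of_nonpos (by linarith), abs_of_nonpos (by linarith)]
      ring
    rw [h1, Multiset.sum_map_add, Multiset.map_const', Multiset.sum_replicate, nsmul_eq_mul,
      ← hudef, ← hk]
  -- express hypothesis and goal
  have hgt' : (u + k * (r - c)) / k < A / m := by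
    unfold avgM at hgt
    rw [hTsum] at hgt
    exact hgt
  have hgoal : u / k < B / m := by
    rw [div_lt_div_iff₀ hkpos hmpos]
    rw [div_lt_div_iff₀ hkpos hmpos] at hgt'
    nlinarith
  unfold avgM
  rw [← hcards]
  exact hgoal

lemma avgM_monotone : MonotoneCostFun avgM :=
  monotone_of_onesided avgM avgM_neg avgM_i avgM_ii avgM_iii

end Avg

section Cut

variable {lam : ℝ}

lemma cutM_i (hlam : 0 < lam) (x y : ℝ) (S : Multiset ℝ) (_ : S ≠ 0) (hxy : x ≤ y)
    (h : ∀ s ∈ S, y ≤ s) : cutM lam y S ≤ cutM lam x S := by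
  unfold cutM
  refine ddiv_le ?_ (Nat.cast_nonneg _)
  have h1 : Multiset.card (S.filter (fun s => lam < |y - s|))
      ≤ Multiset.card (S.filter (fun s => lam < |x - s|)) := by
    refine card_filter_le_filter _ _ S fun s hs hlt => ?_
    have := h s hs
    rw [abs_of_nonpos (by linarith)] at hlt ⊢
    linarith
  exact_mod_cast h1

lemma cutM_ii (hlam : 0 < lam) (x : ℝ) (S T : Multiset ℝ) (hS : S ≠ 0) (hT : T ≠ 0)
    (hxS : ∀ s ∈ S, x ≤ s) (hST : ∀ s ∈ S, ∀ t ∈ T, s ≤ t) :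
    cutM lam x S ≤ cutM lam x (S + T) ∧ cutM lam x (S + T) ≤ cutM lam x T := by
  set p : ℝ → Prop := fun s => lam < |x - s| with hp
  have hmS : 0 < (Multiset.card S : ℝ) := by exact_mod_cast Multiset.card_pos.mpr hS
  have hmT : 0 < (Multiset.card T : ℝ) := by exact_mod_cast Multiset.card_pos.mpr hT
  have hkey : Multiset.card (S.filter p) * Multiset.card T
      ≤ Multiset.card S * Multiset.card (T.filter p) := by
    by_cases hzero : Multiset.card (S.filter p) = 0
    · rw [hzero]; simp
    · have hpos : 0 < Multiset.card (S.filter p) := Nat.pos_of_ne_zero hzero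
      obtain ⟨s0, hs0⟩ := Multiset.exists_mem_of_ne_zero (Multiset.card_pos.mp hpos)
      have hs0S : s0 ∈ S := Multiset.mem_of_mem_filter hs0
      have hps0 : p s0 := Multiset.of_mem_filter hs0
      have hTfull : T.filter p = T := by
        refine Multiset.filter_eq_self.mpr fun t ht => ?_
        have h1 := hxS s0 hs0S
        have h2 := hST s0 hs0S t ht
        have hps0' : lam < s0 - x := by
          rw [hp] at hps0
          rw [abs_of_nonpos (by linarith)] at hps0
          linarith
        show lam < |x - t|
        rw [abs_of_nonpos (by linarith)]
        linarith
      rw [hTfull]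
      exact Nat.mul_le_mul_right _ (Multiset.card_le_card (Multiset.filter_le _ _))
  have hkey' : (Multiset.card (S.filter p) : ℝ) * (Multiset.card T : ℝ)
      ≤ (Multiset.card S : ℝ) * (Multiset.card (T.filter p) : ℝ) := by exact_mod_cast hkey
  have hmed := mediant hmS hmT hkey'
  have e1 : cutM lam x (S + T) = ((Multiset.card (S.filter p) : ℝ) + Multiset.card (T.filter p))
      / ((Multiset.card S : ℝ) + Multiset.card T) := by
    unfold cutM
    rw [Multiset.filter_add, Multiset.card_add, Multiset.card_add]
    push_cast
    rfl
  constructor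
  · rw [e1]; exact hmed.1
  · rw [e1]; exact hmed.2

lemma cutM_iii (hlam : 0 < lam) (S T : Multiset ℝ) (c r : ℝ) (hc : c ∈ S) (hr : r ∈ S)
    (hT : T ≠ 0) (hgt : cutM lam c (S.erase c) > cutM lam c T) (hsr : ∀ s ∈ S, s ≤ r)
    (htr : ∀ t ∈ T, r ≤ t) : cutM lam r (S.erase r) > cutM lam r T := by
  have hcr : c ≤ r := hsr c hc
  have hSer : S.erase c ≠ 0 := by
    intro h
    rw [h] at hgt
    simp only [cutM, Multiset.filter_zero, Multiset.card_zero, Nat.cast_zero, zero_div] at hgt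
    exact absurd (cutM_nonneg lam c T) (not_le.mpr hgt)
  have hcards : Multiset.card (S.erase c) = Multiset.card (S.erase r) := by
    rw [Multiset.card_erase_of_mem hc, Multiset.card_erase_of_mem hr]
  set m := (Multiset.card (S.erase c) : ℝ) with hm
  have hmpos : 0 < m := by
    rw [hm]; exact_mod_cast Multiset.card_pos.mpr hSer
  set k := (Multiset.card T : ℝ) with hk
  have hkpos : 0 < k := by
    rw [hk]; exact_mod_cast Multiset.card_pos.mpr hT
  -- Step 1 : r - c ≤ lam
  have hrc : r - c ≤ lam := by
    by_contra hcon
    push_neg at hcon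
    have hTfull : T.filter (fun t => lam < |c - t|) = T := by
      refine Multiset.filter_eq_self.mpr fun t ht => ?_
      have h1 := htr t ht
      rw [abs_of_nonpos (by linarith)]
      linarith
    have h1 : cutM lam c T = 1 := by
      unfold cutM
      rw [hTfull]
      exact div_self (ne_of_gt hkpos)
    rw [h1] at hgt
    exact absurd (cutM_le_one lam c (S.erase c)) (not_le.mpr hgt)
  -- erase-invariance of counts
  have herase : ∀ (z : ℝ), z ∈ S → Multiset.card ((S.erase z).filter (fun s => lam < |z - s|))
      = Multiset.card (S.filter (fun s => lam < |z - s|)) := by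
    intro z hz
    conv_rhs => rw [← Multiset.cons_erase hz]
    rw [Multiset.filter_cons, if_neg (by simp; linarith), Multiset.card_add]
    simp
  -- Step 2 : counts over S increase from c to r
  have hcount : Multiset.card (S.filter (fun s => lam < |c - s|))
      ≤ Multiset.card (S.filter (fun s => lam < |r - s|)) := by
    refine card_filter_le_filter _ _ S fun s hs hlt => ?_
    have hsle := hsr s hs
    rcases le_total c s with h | h
    · rw [abs_of_nonpos (by linarith)] at hlt
      linarith
    · rw [abs_of_nonneg (by linarith)] at hlt
      rw [abs_of_nonneg (by linarith)]
      linarith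
  -- Step 3 : counts over T decrease from c to r
  have hcountT : Multiset.card (T.filter (fun t => lam < |r - t|))
      ≤ Multiset.card (T.filter (fun t => lam < |c - t|)) := by
    refine card_filter_le_filter _ _ T fun t ht hlt => ?_
    have h1 := htr t ht
    rw [abs_of_nonpos (by linarith)] at hlt
    rw [abs_of_nonpos (by linarith)]
    linarith
  have step1 : cutM lam c (S.erase c) ≤ cutM lam r (S.erase r) := by
    unfold cutM
    rw [herase c hc, herase r hr, ← hcards, ← hm]
    exact ddiv_le (by exact_mod_cast hcount) (le_of_lt hmpos)
  have step2 : cutM lam r T ≤ cutM lam c T := by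
    unfold cutM
    exact ddiv_le (by exact_mod_cast hcountT) (Nat.cast_nonneg _)
  calc cutM lam r T ≤ cutM lam c T := step2
    _ < cutM lam c (S.erase c) := hgt
    _ ≤ cutM lam r (S.erase r) := step1

lemma cutM_monotone (hlam : 0 < lam) : MonotoneCostFun (cutM lam) :=
  monotone_of_onesided (cutM lam) (cutM_neg lam) (cutM_i hlam) (cutM_ii hlam) (cutM_iii hlam)

end Cut

/-- the Max, Average, and Cutoff_λ (for every λ > 0) cost functions are
all monotone, i.e. each satisfies properties (i), (ii) and (iii) of the definition of
a monotone cost function. -/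
theorem max_avg_cutoff_are_monotone :
    MonotoneCostFun maxM ∧ MonotoneCostFun avgM ∧
    ∀ lam : ℝ, 0 < lam → MonotoneCostFun (cutM lam) := by
  exact ⟨maxM_monotone, avgM_monotone, fun lam hlam => cutM_monotone hlam⟩
end
end
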